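/- arXiv:quant-ph/0611146 — 2 statements merged into one kernel-verified Lean document; each statement's English description precedes it below -/
import Mathlib

section
/- For one-qubit full-rank states ρ_t(u), ρ_t(v) with Bloch vectors tu, tv (u, v unit, 0 < t < 1) and any density matrix σ with Bloch vector w: D(σ‖ρ_t(u)) ≤ D(σ‖ρ_t(v)) if and only if w·u ≥ w·v. -/
open Matrix
open scoped ComplexOrder InnerProductSpace

def IsDensity {d : ℕ} (ρ : Matrix (Fin d) (Fin d) ℂ) : Prop :=
  ρ.IsHermitian ∧ ρ.trace = 1 ∧ ρ.PosSemidef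

def IsPure {d : ℕ} (ρ : Matrix (Fin d) (Fin d) ℂ) : Prop :=
  IsDensity ρ ∧ ρ * ρ = ρ

noncomputable def matLog {d : ℕ} (A : Matrix (Fin d) (Fin d) ℂ) : Matrix (Fin d) (Fin d) ℂ :=
  if h : A.IsHermitian then
    (h.eigenvectorUnitary : Matrix (Fin d) (Fin d) ℂ) *
      Matrix.diagonal (fun i => (Real.log (h.eigenvalues i) : ℂ)) *
      (star (h.eigenvectorUnitary : Matrix (Fin d) (Fin d) ℂ))
  else 0

noncomputable def qDiv {d : ℕ} (σ ρ : Matrix (Fin d) (Fin d) ℂ) : ℝ :=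
  ((σ * (matLog σ - matLog ρ)).trace).re

noncomputable def rhoBloch (u : EuclideanSpace ℝ (Fin 3)) : Matrix (Fin 2) (Fin 2) ℂ :=
  !![(((1 + u 2) / 2 : ℝ) : ℂ), ((u 0 : ℂ) - Complex.I * (u 1 : ℂ)) / 2;
     ((u 0 : ℂ) + Complex.I * (u 1 : ℂ)) / 2, (((1 - u 2) / 2 : ℝ) : ℂ)]

noncomputable def dBpure {d : ℕ} (ρ σ : Matrix (Fin d) (Fin d) ℂ) : ℝ :=
  Real.sqrt (1 - ((ρ * σ).trace).re)

noncomputable def dFS {d : ℕ} (ρ σ : Matrix (Fin d) (Fin d) ℂ) : ℝ :=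
  Real.arccos (Real.sqrt (((ρ * σ).trace).re))

/-!
A qubit state with Bloch vector `x`, `0 < ‖x‖ = r < 1`, has the two eigenvalues `(1 ± r)/2`,
and on a two-point spectrum the logarithm is affine. Hence `log ρ_x = a(r)·1 + b(r)·ρ_x` with
coefficients depending only on `r`, the entropy term `Tr σ log σ` cancels in
`D(σ‖ρ_x) - D(σ‖ρ_y)`, and what is left is `b(r) · Tr σ(ρ_y - ρ_x) = (b(r)/2)(⟪w, y⟫ - ⟪w, x⟫)`
with `b(r) = log((1 + r)/(1 - r))/r > 0`.
-/

open Polynomial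

theorem Matrix.IsHermitian.eval_eigenvalues_eq_zero {𝕜 n : Type*} [RCLike 𝕜] [Fintype n]
    [DecidableEq n] {A : Matrix n n 𝕜} (hA : A.IsHermitian) {p : ℝ[X]} (hp : aeval A p = 0)
    (i : n) : p.eval (hA.eigenvalues i) = 0 := by
  have : Nonempty n := ⟨i⟩
  have h := spectrum.subset_polynomial_aeval A p ⟨_, hA.eigenvalues_mem_spectrum_real i, rfl⟩
  rwa [hp, spectrum.zero_eq, Set.mem_singleton_iff] at h

theorem matLog_eq_of_log_eigenvalues {d : ℕ} {A : Matrix (Fin d) (Fin d) ℂ} (hA : A.IsHermitian)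
    (a b : ℝ) (h : ∀ i, Real.log (hA.eigenvalues i) = a + b * hA.eigenvalues i) :
    matLog A = (a : ℂ) • 1 + (b : ℂ) • A := by
  have hdiag : diagonal (fun i => (Real.log (hA.eigenvalues i) : ℂ))
      = (a : ℂ) • 1 + (b : ℂ) • diagonal (RCLike.ofReal ∘ hA.eigenvalues) := by
    ext i j
    by_cases hij : i = j <;> simp [hij, one_apply, h]
  conv_rhs => rw [hA.spectral_theorem, Unitary.conjStarAlgAut_apply]
  rw [matLog, dif_pos hA, hdiag, mul_add, add_mul, Matrix.mul_smul, Matrix.mul_smul,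
    Matrix.smul_mul, Matrix.smul_mul, mul_one, Unitary.mul_star_self_of_mem hA.eigenvectorUnitary.2]

theorem isHermitian_rhoBloch (x : EuclideanSpace ℝ (Fin 3)) : (rhoBloch x).IsHermitian := by
  ext i j
  fin_cases i <;> fin_cases j <;> simp [rhoBloch, conjTranspose_apply, Complex.ext_iff]

theorem aeval_rhoBloch (x : EuclideanSpace ℝ (Fin 3)) :
    aeval (rhoBloch x) (X ^ 2 - X + C ((1 - ‖x‖ ^ 2) / 4)) = 0 := by
  have hx := EuclideanSpace.real_norm_sq_eq x
  rw [Fin.sum_univ_three] at hx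
  simp only [map_add, map_sub, map_pow, aeval_X, aeval_C, Algebra.algebraMap_eq_smul_one, hx]
  ext i j
  fin_cases i <;> fin_cases j <;>
    simp [rhoBloch, sq, one_apply] <;> ring_nf <;> simp [Complex.I_sq]

theorem trace_rhoBloch_mul_re (w x : EuclideanSpace ℝ (Fin 3)) :
    (rhoBloch w * rhoBloch x).trace.re = (1 + ⟪w, x⟫_ℝ) / 2 := by
  simp [rhoBloch, trace, Fin.sum_univ_two, Fin.sum_univ_three, PiLp.inner_apply]
  ring

theorem eigenvalues_rhoBloch (x : EuclideanSpace ℝ (Fin 3)) (i : Fin 2) :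
    (isHermitian_rhoBloch x).eigenvalues i = (1 + ‖x‖) / 2 ∨
      (isHermitian_rhoBloch x).eigenvalues i = (1 - ‖x‖) / 2 := by
  have h := (isHermitian_rhoBloch x).eval_eigenvalues_eq_zero (aeval_rhoBloch x) i
  simp only [eval_add, eval_sub, eval_pow, eval_X, eval_C] at h
  have hfac : ((isHermitian_rhoBloch x).eigenvalues i - (1 + ‖x‖) / 2) *
      ((isHermitian_rhoBloch x).eigenvalues i - (1 - ‖x‖) / 2) = 0 := by linear_combination h
  rcases mul_eq_zero.mp hfac with h | h
  · exact .inl (sub_eq_zero.mp h)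
  · exact .inr (sub_eq_zero.mp h)

theorem matLog_rhoBloch {x : EuclideanSpace ℝ (Fin 3)} (hx0 : 0 < ‖x‖) (hx1 : ‖x‖ < 1) :
    matLog (rhoBloch x) = ((Real.log ((1 - ‖x‖ ^ 2) / 4) / 2 : ℝ) : ℂ) • 1 +
      ((Real.log ((1 + ‖x‖) / (1 - ‖x‖)) / (2 * ‖x‖) : ℝ) : ℂ) • ((2 : ℂ) • rhoBloch x - 1) := by
  set r := ‖x‖
  have hp : 0 < (1 + r) / 2 := by linarith
  have hq : 0 < (1 - r) / 2 := by linarith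
  have hsum : Real.log ((1 - r ^ 2) / 4) = Real.log ((1 + r) / 2) + Real.log ((1 - r) / 2) := by
    rw [← Real.log_mul hp.ne' hq.ne']; ring_nf
  have hdiff : Real.log ((1 + r) / (1 - r)) = Real.log ((1 + r) / 2) - Real.log ((1 - r) / 2) := by
    rw [← Real.log_div hp.ne' hq.ne']; congr 1; field_simp
  rw [matLog_eq_of_log_eigenvalues (isHermitian_rhoBloch x)
    (Real.log ((1 - r ^ 2) / 4) / 2 - Real.log ((1 + r) / (1 - r)) / (2 * r))
    (Real.log ((1 + r) / (1 - r)) / r)]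
  · push_cast; module
  · intro i
    rw [hsum, hdiff]
    rcases eigenvalues_rhoBloch x i with h | h <;> rw [h] <;> field_simp <;> ring

theorem qDiv_rhoBloch_sub_qDiv_rhoBloch (w : EuclideanSpace ℝ (Fin 3))
    {x y : EuclideanSpace ℝ (Fin 3)} (hx0 : 0 < ‖x‖) (hx1 : ‖x‖ < 1) (hxy : ‖y‖ = ‖x‖) :
    qDiv (rhoBloch w) (rhoBloch x) - qDiv (rhoBloch w) (rhoBloch y) =
      Real.log ((1 + ‖x‖) / (1 - ‖x‖)) / (2 * ‖x‖) * (⟪w, y⟫_ℝ - ⟪w, x⟫_ℝ) := by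
  have hlog : matLog (rhoBloch y) - matLog (rhoBloch x)
      = ((Real.log ((1 + ‖x‖) / (1 - ‖x‖)) / ‖x‖ : ℝ) : ℂ) • (rhoBloch y - rhoBloch x) := by
    rw [matLog_rhoBloch hx0 hx1, matLog_rhoBloch (hxy ▸ hx0) (hxy ▸ hx1), hxy]
    push_cast; module
  rw [qDiv, qDiv, ← Complex.sub_re, ← trace_sub, ← mul_sub, sub_sub_sub_cancel_left, hlog,
    mul_smul_comm, trace_smul, smul_eq_mul, Complex.re_ofReal_mul, mul_sub, trace_sub,
    Complex.sub_re, trace_rhoBloch_mul_re, trace_rhoBloch_mul_re]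
  ring

theorem stmt11_general (t : ℝ) (ht0 : 0 < t) (ht1 : t < 1)
    (u v : EuclideanSpace ℝ (Fin 3)) (hu : ‖u‖ = 1) (hv : ‖v‖ = 1)
    (w : EuclideanSpace ℝ (Fin 3)) :
    qDiv (rhoBloch w) (rhoBloch (t • u)) ≤ qDiv (rhoBloch w) (rhoBloch (t • v)) ↔
      ⟪w, u⟫_ℝ ≥ ⟪w, v⟫_ℝ := by
  have htu : ‖t • u‖ = t := by rw [norm_smul, hu, Real.norm_of_nonneg ht0.le, mul_one]
  have htv : ‖t • v‖ = t := by rw [norm_smul, hv, Real.norm_of_nonneg ht0.le, mul_one]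
  have hpos : 0 < Real.log ((1 + t) / (1 - t)) / 2 :=
    half_pos (Real.log_pos ((one_lt_div (by linarith)).mpr (by linarith)))
  have key : qDiv (rhoBloch w) (rhoBloch (t • v)) - qDiv (rhoBloch w) (rhoBloch (t • u)) =
      Real.log ((1 + t) / (1 - t)) / 2 * (⟪w, u⟫_ℝ - ⟪w, v⟫_ℝ) := by
    rw [qDiv_rhoBloch_sub_qDiv_rhoBloch w (by rwa [htv]) (by rwa [htv]) (htu.trans htv.symm),
      htv, real_inner_smul_right, real_inner_smul_right]
    field_simp
  rw [← sub_nonneg, key, mul_nonneg_iff_of_pos_left hpos, sub_nonneg, ge_iff_le]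

theorem stmt11 (t : ℝ) (ht0 : 0 < t) (ht1 : t < 1)
    (u v : EuclideanSpace ℝ (Fin 3)) (hu : ‖u‖ = 1) (hv : ‖v‖ = 1)
    (w : EuclideanSpace ℝ (Fin 3)) (hw : ‖w‖ ≤ 1) :
    qDiv (rhoBloch w) (rhoBloch (t • u)) ≤ qDiv (rhoBloch w) (rhoBloch (t • v)) ↔
      ⟪w, u⟫_ℝ ≥ ⟪w, v⟫_ℝ :=
  stmt11_general t ht0 ht1 u v hu hv w
end

section
/- For pure states σ, ρ, ρ̃ on ℂ^d and ε ∈ (0,1), with ρ_ε = (1−ε)ρ + (ε/d)I and ρ̃_ε = (1−ε)ρ̃ + (ε/d)I: D(σ‖ρ_ε) ≤ D(σ‖ρ̃_ε) if and only if Tr(σρ) ≥ Tr(σρ̃). In particular this condition is independent of ε. -/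
/-! Since `ρ` is a projection, `ρ_ε = (ε/d)·1 + (1-ε)·ρ` is a function of `ρ` in the functional
calculus, hence so is its logarithm: `log ρ_ε = log(ε/d)·1 + κ·ρ` with
`κ = log(ε/d + 1 - ε) - log(ε/d) > 0`. The entropy term `Tr σ log σ` cancels in the difference,
`D(σ‖ρ_ε) - D(σ‖ρ̃_ε) = κ·(Tr σρ̃ - Tr σρ)`, whose sign does not depend on `ε`. -/

open Matrix
open scoped ComplexOrder InnerProductSpace

noncomputable def mixWith {d : ℕ} (ρ : Matrix (Fin d) (Fin d) ℂ) (ε : ℝ) :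
    Matrix (Fin d) (Fin d) ℂ :=
  ((1 - ε : ℝ) : ℂ) • ρ + ((ε : ℂ) / (d : ℂ)) • (1 : Matrix (Fin d) (Fin d) ℂ)

section
variable {A : Type*} [Ring A] [StarRing A] [Algebra ℝ A] [TopologicalSpace A]
  [ContinuousFunctionalCalculus ℝ A IsSelfAdjoint]

theorem cfc_eq_of_isIdempotentElem {p : A} (hp : IsIdempotentElem p) (hp' : IsSelfAdjoint p)
    (f : ℝ → ℝ) : cfc f p = algebraMap ℝ A (f 0) + (f 1 - f 0) • p := by
  calc cfc f p = cfc (fun x ↦ f 0 + (f 1 - f 0) * x) p := by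
        refine cfc_congr fun x hx ↦ ?_
        rcases hp.spectrum_subset ℝ hx with rfl | rfl <;> simp
    _ = _ := by rw [cfc_const_add (f 0) _ p, cfc_const_mul _ _ p, cfc_id' ℝ p]
end

theorem matLog_eq_cfc {d : ℕ} {A : Matrix (Fin d) (Fin d) ℂ} (hA : A.IsHermitian) :
    matLog A = cfc Real.log A := by
  rw [matLog, dif_pos hA, hA.cfc_eq, IsHermitian.cfc, Unitary.conjStarAlgAut_apply]
  rfl

section
variable {d : ℕ} {ρ ρ' : Matrix (Fin d) (Fin d) ℂ}

theorem mixWith_eq_cfc (hρ : ρ.IsHermitian) (hρ₂ : IsIdempotentElem ρ) (ε : ℝ) :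
    mixWith ρ ε = cfc (fun x ↦ ε / d + (1 - ε) * x) ρ := by
  rw [cfc_eq_of_isIdempotentElem hρ₂ hρ.isSelfAdjoint, mixWith, Algebra.algebraMap_eq_smul_one,
    add_comm]
  congr 1
  · rw [mul_zero, add_zero, ← Complex.coe_smul, Complex.ofReal_div, Complex.ofReal_natCast]
  · rw [Complex.coe_smul]
    ring_nf

theorem matLog_mixWith (hρ : ρ.IsHermitian) (hρ₂ : IsIdempotentElem ρ) (ε : ℝ) :
    matLog (mixWith ρ ε) =
      algebraMap ℝ _ (Real.log (ε / d)) + (Real.log (ε / d + (1 - ε)) - Real.log (ε / d)) • ρ := by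
  have hfin := hρ₂.finite_spectrum ℝ
  rw [mixWith_eq_cfc hρ hρ₂, matLog_eq_cfc IsSelfAdjoint.cfc,
    ← cfc_comp' _ _ _ ((hfin.image _).continuousOn _) (hfin.continuousOn _) hρ.isSelfAdjoint,
    cfc_eq_of_isIdempotentElem hρ₂ hρ.isSelfAdjoint]
  simp

theorem qDiv_sub_qDiv (σ A B : Matrix (Fin d) (Fin d) ℂ) :
    qDiv σ A - qDiv σ B = (σ * (matLog B - matLog A)).trace.re := by
  simp only [qDiv, Matrix.mul_sub, trace_sub, Complex.sub_re]
  ring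

theorem qDiv_mixWith_sub_qDiv_mixWith (σ : Matrix (Fin d) (Fin d) ℂ)
    (hρ : ρ.IsHermitian) (hρ₂ : IsIdempotentElem ρ)
    (hρ' : ρ'.IsHermitian) (hρ'₂ : IsIdempotentElem ρ') (ε : ℝ) :
    qDiv σ (mixWith ρ ε) - qDiv σ (mixWith ρ' ε) =
      (Real.log (ε / d + (1 - ε)) - Real.log (ε / d)) *
        ((σ * ρ').trace.re - (σ * ρ).trace.re) := by
  rw [qDiv_sub_qDiv, matLog_mixWith hρ hρ₂, matLog_mixWith hρ' hρ'₂, add_sub_add_left_eq_sub,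
    ← smul_sub, Matrix.mul_smul, trace_smul, Matrix.mul_sub, trace_sub]
  simp

end

theorem stmt16_general {d : ℕ} (hd : 0 < d) (σ ρ ρ' : Matrix (Fin d) (Fin d) ℂ)
    (hρ : IsPure ρ) (hρ' : IsPure ρ')
    (ε : ℝ) (hε0 : 0 < ε) (hε1 : ε < 1) :
    qDiv σ (mixWith ρ ε) ≤ qDiv σ (mixWith ρ' ε) ↔
      ((σ * ρ).trace).re ≥ ((σ * ρ').trace).re := by
  have hκ : 0 < Real.log (ε / d + (1 - ε)) - Real.log (ε / d) := by
    have : 0 < ε / d := by positivity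
    exact sub_pos.mpr (Real.log_lt_log this (by linarith))
  rw [← sub_nonpos, qDiv_mixWith_sub_qDiv_mixWith σ hρ.1.1 hρ.2 hρ'.1.1 hρ'.2 ε,
    ← mul_zero (_ - _), mul_le_mul_iff_of_pos_left hκ, sub_nonpos, ge_iff_le]

theorem stmt16 {d : ℕ} (hd : 0 < d) (σ ρ ρ' : Matrix (Fin d) (Fin d) ℂ)
    (hσ : IsPure σ) (hρ : IsPure ρ) (hρ' : IsPure ρ')
    (ε : ℝ) (hε0 : 0 < ε) (hε1 : ε < 1) :
    qDiv σ (mixWith ρ ε) ≤ qDiv σ (mixWith ρ' ε) ↔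
      ((σ * ρ).trace).re ≥ ((σ * ρ').trace).re :=
  stmt16_general hd σ ρ ρ' hρ hρ' ε hε0 hε1
end
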